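/- arXiv:0906.3247 — 5 statements merged into one kernel-verified Lean document; each statement's English description precedes it below -/
import Mathlib

section
/- Let n ≥ 1 and d ≥ 0 be integers, and let a, b : ℤ → ℕ be functions such that a is bounded below and a(i) ≤ b(i) + a(i − n) for all i ∈ ℤ. If b has polynomial growth of degree ≤ d, then a has polynomial growth of degree ≤ d + 1. (This is the numerical content of the paper's growth lemma: for a triangle Σₙ M → M → N with positive shift n, growth(M) ≤ growth(N) + 1, applied to a(i) = dim H^i(M) and b(i) = dim H^i(N).) -/
/-- A function `f : ℤ → ℕ` has polynomial growth of degree at most `d` if there is a real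
polynomial `p` of degree at most `d` with `f i ≤ p i` for all sufficiently large `i`. -/
def HasPolyGrowth (f : ℤ → ℕ) (d : ℕ) : Prop :=
  ∃ p : Polynomial ℝ, p.natDegree ≤ d ∧ ∃ N : ℤ, ∀ i : ℤ, N ≤ i → (f i : ℝ) ≤ p.eval (i : ℝ)

/-- A function `f : ℤ → ℕ` is bounded below if it vanishes in all sufficiently small degrees. -/
def BoundedBelowFun (f : ℤ → ℕ) : Prop :=
  ∃ i₀ : ℤ, ∀ i : ℤ, i < i₀ → f i = 0

/-!
Unrolling `a i ≤ b i + a (i - n)` until `a` vanishes bounds `a j` by a sum of at most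
`j - i₀ + 1` values of `b` on `[i₀, j]`. Since `b` is eventually below `c * i ^ d`, each of these
values is at most `c * j ^ d + C`, which gives a bound of degree `d + 1`.
-/

open Filter Polynomial

theorem HasPolyGrowth.exists_eventually_le_mul_pow {f : ℤ → ℕ} {d : ℕ} (hf : HasPolyGrowth f d) :
    ∃ c : ℝ, 0 ≤ c ∧ ∀ᶠ i in atTop, (f i : ℝ) ≤ c * (i : ℝ) ^ d := by
  obtain ⟨p, hpd, N, hpN⟩ := hf
  have hpO : p.eval =O[atTop] (X ^ d : ℝ[X]).eval :=
    isBigO_atTop_of_degree_le _ _ ((degree_le_of_natDegree_le hpd).trans (by simp))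
  obtain ⟨c, hc, hpc⟩ := hpO.exists_pos
  refine ⟨c, hc.le, ?_⟩
  filter_upwards [tendsto_intCast_atTop_atTop.eventually hpc.bound, eventually_ge_atTop N,
    eventually_ge_atTop 0] with i hbound hNi hi
  have hi' : (0 : ℝ) ≤ i := by exact_mod_cast hi
  calc (f i : ℝ) ≤ p.eval (i : ℝ) := hpN i hNi
    _ ≤ ‖p.eval (i : ℝ)‖ := Real.le_norm_self _
    _ ≤ c * ‖(X ^ d : ℝ[X]).eval (i : ℝ)‖ := hbound
    _ = c * (i : ℝ) ^ d := by simp [abs_of_nonneg hi']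

theorem exists_le_mul_pow_add_of_eventually_le {f : ℤ → ℕ} {c : ℝ} (hc : 0 ≤ c) {d : ℕ}
    (hf : ∀ᶠ i in atTop, (f i : ℝ) ≤ c * (i : ℝ) ^ d) (i₀ : ℤ) :
    ∃ C : ℝ, ∀ i j : ℤ, i₀ ≤ i → i ≤ j → 0 ≤ j → (f i : ℝ) ≤ c * (j : ℝ) ^ d + C := by
  obtain ⟨N, hN⟩ := eventually_atTop.1 (hf.and (eventually_ge_atTop 0))
  refine ⟨∑ k ∈ Finset.Ico i₀ N, (f k : ℝ), fun i j hi₀i hij hj => ?_⟩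
  have hpow : 0 ≤ c * (j : ℝ) ^ d := by positivity
  by_cases hNi : N ≤ i
  · obtain ⟨hfi, hi⟩ := hN i hNi
    have hmono : c * (i : ℝ) ^ d ≤ c * (j : ℝ) ^ d := by gcongr
    have hsum : 0 ≤ ∑ k ∈ Finset.Ico i₀ N, (f k : ℝ) := by positivity
    linarith
  · have hsum : (f i : ℝ) ≤ ∑ k ∈ Finset.Ico i₀ N, (f k : ℝ) :=
      Finset.single_le_sum (fun _ _ => Nat.cast_nonneg _) (Finset.mem_Ico.2 ⟨hi₀i, by omega⟩)
    linarith

theorem le_nsmul_of_le_add_shift {M : Type*} [AddCommMonoid M] [PartialOrder M]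
    [IsOrderedAddMonoid M] {a b : ℤ → M} {n i₀ : ℤ} (hn : 1 ≤ n) (ha : ∀ i < i₀, a i = 0)
    (hab : ∀ i, a i ≤ b i + a (i - n)) {B : M} (hB : 0 ≤ B) {j : ℤ}
    (hbB : ∀ i, i₀ ≤ i → i ≤ j → b i ≤ B) :
    a j ≤ (j - i₀ + 1).toNat • B := by
  suffices key : ∀ m : ℕ, ∀ i ≤ j, i < i₀ + m → a i ≤ m • B from key _ j le_rfl (by omega)
  intro m
  induction m with
  | zero => intro i _ hi; simp [ha i (by simpa using hi)]
  | succ m ih =>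
    intro i hij hi
    by_cases hi₀ : i < i₀
    · rw [ha i hi₀]; exact nsmul_nonneg hB _
    · calc a i ≤ b i + a (i - n) := hab i
        _ ≤ B + m • B := add_le_add (hbB i (by omega) hij) (ih _ (by omega) (by omega))
        _ = (m + 1) • B := (succ_nsmul' B m).symm

/-- Growth lemma: for a triangle `Σₙ M → M → N` with shift `n ≥ 1`, the growth of `M` is at most
one more than the growth of `N`. -/
theorem growth_le_succ_of_triangle (n : ℤ) (hn : 1 ≤ n) (d : ℕ) (a b : ℤ → ℕ)
    (ha : BoundedBelowFun a)
    (hab : ∀ i : ℤ, a i ≤ b i + a (i - n))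
    (hb : HasPolyGrowth b d) :
    HasPolyGrowth a (d + 1) := by
  obtain ⟨i₀, hi₀⟩ := ha
  obtain ⟨c, hc, hbc⟩ := hb.exists_eventually_le_mul_pow
  obtain ⟨C, hC⟩ := exists_le_mul_pow_add_of_eventually_le hc hbc i₀
  refine ⟨(X + Polynomial.C (1 - (i₀ : ℝ))) * (Polynomial.C c * X ^ d + Polynomial.C C),
    by compute_degree; omega, max 0 i₀, fun j hj => ?_⟩
  have hj0 : 0 ≤ j := le_of_max_le_left hj
  have hi₀j : i₀ ≤ j := le_of_max_le_right hj
  have hB : (0 : ℝ) ≤ c * (j : ℝ) ^ d + C := (Nat.cast_nonneg _).trans (hC j j hi₀j le_rfl hj0)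
  have hle := le_nsmul_of_le_add_shift (a := fun i => (a i : ℝ)) hn (by simpa using hi₀)
    (by exact_mod_cast hab) hB fun i hi₀i hij => hC i j hi₀i hij hj0
  have hcast : (((j - i₀ + 1).toNat : ℕ) : ℝ) = (j : ℝ) - i₀ + 1 := by
    rw [← Int.cast_natCast, Int.toNat_of_nonneg (by omega)]; push_cast; ring
  calc (a j : ℝ) ≤ ((j : ℝ) - i₀ + 1) * (c * (j : ℝ) ^ d + C) := by
        rwa [nsmul_eq_mul, hcast] at hle
    _ = _ := by simp only [eval_mul, eval_add, eval_X, eval_C, eval_pow]; ring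
end

section
/- Let n ≥ 1 and d ≥ 0 be integers and let b : ℤ → ℕ be a function that is bounded below and has polynomial growth of degree ≤ d. Then the function i ↦ Σ_{j ≥ 0} b(i − jn) (a finite sum for each i, since b is bounded below) has polynomial growth of degree ≤ d + 1. -/
/-!
Since `b` vanishes below some `i₀`, the sum at `i` has at most `i - i₀ + 1` nonzero terms, all
evaluated at arguments `≤ i`. A polynomial bound of degree `d` for `b` upgrades, after adding the
maximum of `b` over the finitely many arguments in `[i₀, N]` and replacing the coefficients by their
absolute values, to a bound `P i` for `b` on all of `(-∞, i]`. Hence the sum is at most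
`(i - i₀ + 1) * P i`, a polynomial of degree `≤ d + 1`.
-/

open Polynomial Filter

namespace Polynomial

noncomputable def absCoeffs (p : ℝ[X]) : ℝ[X] :=
  ∑ k ∈ Finset.range (p.natDegree + 1), C |p.coeff k| * X ^ k

variable (p : ℝ[X])

theorem natDegree_absCoeffs_le : p.absCoeffs.natDegree ≤ p.natDegree :=
  natDegree_sum_le_of_forall_le _ _ fun k hk =>
    (natDegree_C_mul_X_pow_le _ k).trans (Nat.lt_succ_iff.mp (Finset.mem_range.mp hk))

theorem eval_absCoeffs (y : ℝ) :
    p.absCoeffs.eval y = ∑ k ∈ Finset.range (p.natDegree + 1), |p.coeff k| * y ^ k := by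
  simp [absCoeffs, eval_finsetSum]

theorem eval_absCoeffs_nonneg {y : ℝ} (hy : 0 ≤ y) : 0 ≤ p.absCoeffs.eval y := by
  rw [eval_absCoeffs]
  positivity

theorem abs_eval_le_eval_absCoeffs {x y : ℝ} (hxy : |x| ≤ y) :
    |p.eval x| ≤ p.absCoeffs.eval y := by
  rw [eval_eq_sum_range, eval_absCoeffs]
  refine (Finset.abs_sum_le_sum_abs _ _).trans (Finset.sum_le_sum fun k _ => ?_)
  rw [abs_mul, abs_pow]
  gcongr

end Polynomial

theorem HasPolyGrowth.exists_bound_on_Iic {b : ℤ → ℕ} {d : ℕ} (hbdd : BoundedBelowFun b)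
    (hb : HasPolyGrowth b d) :
    ∃ P : ℝ[X], P.natDegree ≤ d ∧ ∀ᶠ i : ℤ in atTop, ∀ x ∈ Set.Iic i, (b x : ℝ) ≤ P.eval (i : ℝ) := by
  obtain ⟨i₀, hi₀⟩ := hbdd
  obtain ⟨p, hpd, N, hpN⟩ := hb
  set c : ℕ := (Finset.Icc i₀ N).sup b
  refine ⟨C (c : ℝ) + p.absCoeffs, ?_, ?_⟩
  · refine (natDegree_add_le _ _).trans (max_le ?_ (p.natDegree_absCoeffs_le.trans hpd))
    rw [natDegree_C]
    exact Nat.zero_le d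
  filter_upwards [eventually_ge_atTop |i₀|] with i hi x hx
  have habs : 0 ≤ p.absCoeffs.eval (i : ℝ) :=
    p.eval_absCoeffs_nonneg (by exact_mod_cast (abs_nonneg i₀).trans hi)
  rw [eval_add, eval_C]
  rcases lt_or_ge x i₀ with hx₀ | hx₀
  · rw [hi₀ x hx₀, Nat.cast_zero]
    positivity
  rcases le_or_gt x N with hxN | hxN
  · have : b x ≤ c := Finset.le_sup (Finset.mem_Icc.mpr ⟨hx₀, hxN⟩)
    have : (b x : ℝ) ≤ c := by exact_mod_cast this
    linarith
  · have hxi : |(x : ℝ)| ≤ i := by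
      have : |x| ≤ i := abs_le.mpr ⟨(neg_le_of_abs_le hi).trans hx₀, hx⟩
      exact_mod_cast this
    calc (b x : ℝ) ≤ p.eval (x : ℝ) := hpN x hxN.le
      _ ≤ |p.eval (x : ℝ)| := le_abs_self _
      _ ≤ p.absCoeffs.eval (i : ℝ) := p.abs_eval_le_eval_absCoeffs hxi
      _ ≤ c + p.absCoeffs.eval (i : ℝ) := le_add_of_nonneg_left (Nat.cast_nonneg c)

theorem cast_tsum_sub_mul_le {f : ℤ → ℕ} {i₀ i n : ℤ} {B : ℝ} (hf : ∀ x < i₀, f x = 0)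
    (hn : 1 ≤ n) (hi : i₀ ≤ i) (hB : ∀ x ≤ i, (f x : ℝ) ≤ B) :
    ((∑' j : ℕ, f (i - j * n) : ℕ) : ℝ) ≤ (i - i₀ + 1) * B := by
  set m := (i - i₀ + 1).toNat
  have hm : (m : ℤ) = i - i₀ + 1 := Int.toNat_of_nonneg (by omega)
  have hsupp : ∀ j ∉ Finset.range m, f (i - j * n) = 0 := by
    intro j hj
    have : (m : ℤ) ≤ j := by exact_mod_cast not_lt.mp (Finset.mem_range.not.mp hj)
    exact hf _ (by nlinarith)
  rw [tsum_eq_sum hsupp, Nat.cast_sum]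
  calc ∑ j ∈ Finset.range m, (f (i - j * n) : ℝ) ≤ (Finset.range m).card • B :=
        Finset.sum_le_card_nsmul _ _ _ fun j _ => hB _ (by nlinarith)
    _ = (i - i₀ + 1) * B := by
        rw [Finset.card_range, nsmul_eq_mul, ← Int.cast_natCast, hm]
        push_cast
        ring

/-- If `b : ℤ → ℕ` is bounded below with polynomial growth of degree at most `d` and `n ≥ 1`,
then `i ↦ ∑_{j ≥ 0} b (i - j n)` (a finite sum for each `i`, since `b` is bounded below)
has polynomial growth of degree at most `d + 1`. -/
theorem polyGrowth_sum (n : ℤ) (hn : 1 ≤ n) (d : ℕ) (b : ℤ → ℕ)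
    (hbdd : BoundedBelowFun b) (hb : HasPolyGrowth b d) :
    HasPolyGrowth (fun i : ℤ => ∑' j : ℕ, b (i - (j : ℤ) * n)) (d + 1) := by
  obtain ⟨P, hPd, hP⟩ := hb.exists_bound_on_Iic hbdd
  obtain ⟨i₀, hi₀⟩ := hbdd
  obtain ⟨N, hN⟩ := eventually_atTop.mp (hP.and (eventually_ge_atTop i₀))
  refine ⟨(X + C (1 - (i₀ : ℝ))) * P, ?_, N, fun i hi => ?_⟩
  · exact natDegree_mul_le.trans (by rw [natDegree_X_add_C]; omega)
  · obtain ⟨hbound, hi₀i⟩ := hN i hi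
    simpa [sub_add_eq_add_sub, add_sub_assoc] using
      cast_tsum_sub_mul_le hi₀ hn hi₀i hbound
end

section
/- Let k be a field, n a nonzero integer, and d ≥ 0 an integer. Let M and N be cochain complexes of k-vector spaces that are locally finite and cohomologically bounded below, and suppose that in the derived category of k-vector spaces N is isomorphic to the mapping cone of a morphism χ : Σₙ M → M, where Σₙ denotes the cohomological shift with H^i(Σₙ M) = H^{i−n}(M). If the function i ↦ dim_k H^i(N) has polynomial growth of degree ≤ d, then the function i ↦ dim_k H^i(M) has polynomial growth of degree ≤ d + 1. -/
open CategoryTheory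

/-!
The long exact cohomology sequence of the triangle `Σₙ M → M → cone χ` bounds `h^i = dim H^i(M)`
recursively: `h^i ≤ h^{i-n} + dim H^i(N)` if `n > 0`, and `h^i ≤ h^{i+n} + dim H^{i+n-1}(N)` if
`n < 0`. Since `h` vanishes in low degrees, unwinding the recursion bounds `h^i` by a partial sum
of `dim H^a(N)` over `a ≤ i`, and partial sums raise the degree of polynomial growth by one.
-/

open Filter Finset Polynomial

section

variable {f g : ℤ → ℕ} {d : ℕ}

theorem hasPolyGrowth_iff_eventually_le_mul_pow :
    HasPolyGrowth f d ↔ ∃ C : ℝ, ∀ᶠ i in atTop, (f i : ℝ) ≤ C * (i : ℝ) ^ d := by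
  constructor
  · rintro ⟨p, hpd, N, hp⟩
    have hdeg : p.degree ≤ (X ^ d : ℝ[X]).degree := by
      rw [degree_X_pow]; exact degree_le_of_natDegree_le hpd
    obtain ⟨C, hC⟩ := ((isBigO_atTop_of_degree_le p _ hdeg).comp_tendsto
      tendsto_intCast_atTop_atTop).bound
    refine ⟨C, ?_⟩
    filter_upwards [hC, eventually_ge_atTop N, eventually_ge_atTop 0] with i hCi hNi hi0
    have hi : (0 : ℝ) ≤ i := by exact_mod_cast hi0
    simp only [Function.comp_apply, eval_pow, eval_X, Real.norm_eq_abs, abs_pow,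
      abs_of_nonneg hi] at hCi
    exact (hp i hNi).trans ((le_abs_self _).trans hCi)
  · rintro ⟨C, hC⟩
    obtain ⟨N, hN⟩ := hC.exists_forall_of_atTop
    refine ⟨Polynomial.C C * X ^ d, (natDegree_C_mul_le _ _).trans (natDegree_X_pow_le d), N,
      fun i hi => by simpa using hN i hi⟩

theorem le_sum_Icc_of_le_sub_add {m c i₀ : ℤ} (hm : 0 < m) (hg : ∀ i < i₀, g i = 0)
    (hrec : ∀ j, g j ≤ g (j - m) + f (j - c)) (j : ℤ) :
    g j ≤ ∑ a ∈ Icc (i₀ - c) (j - c), f a := by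
  induction j using Int.strongRec (m := i₀) with
  | lt j hj => simp [hg j hj]
  | ge j hj ih =>
    calc g j ≤ g (j - m) + f (j - c) := hrec j
      _ ≤ ∑ a ∈ Icc (i₀ - c) (j - m - c), f a + f (j - c) := by gcongr; exact ih _ (by omega)
      _ = ∑ a ∈ insert (j - c) (Icc (i₀ - c) (j - m - c)), f a := by
          rw [sum_insert (by simp only [mem_Icc]; omega), add_comm]
      _ ≤ ∑ a ∈ Icc (i₀ - c) (j - c), f a :=
          sum_le_sum_of_subset fun a ha => by simp only [mem_insert, mem_Icc] at ha ⊢; omega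

namespace HasPolyGrowth

theorem mono (hg : HasPolyGrowth g d) (hfg : ∀ i, f i ≤ g i) : HasPolyGrowth f d := by
  obtain ⟨p, hpd, N, hp⟩ := hg
  exact ⟨p, hpd, N, fun i hi => (Nat.cast_le.mpr (hfg i)).trans (hp i hi)⟩

theorem sum_Icc (hf : HasPolyGrowth f d) (L : ℤ) :
    HasPolyGrowth (fun i => ∑ a ∈ Icc L i, f a) (d + 1) := by
  obtain ⟨C, hC⟩ := hasPolyGrowth_iff_eventually_le_mul_pow.mp hf
  obtain ⟨N, hN⟩ := (hC.and (eventually_ge_atTop 1)).exists_forall_of_atTop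
  set K := ∑ a ∈ Icc L N, f a
  refine hasPolyGrowth_iff_eventually_le_mul_pow.mpr ⟨K + |C|, ?_⟩
  filter_upwards [eventually_ge_atTop N] with i hi
  have hN1 : 1 ≤ N := (hN N le_rfl).2
  have htail : ∀ a ∈ Icc N i, (f a : ℝ) ≤ |C| * (i : ℝ) ^ d := fun a ha => by
    obtain ⟨haN, hai⟩ := mem_Icc.mp ha
    have ha0 : (0 : ℝ) ≤ a := by exact_mod_cast (by omega : (0 : ℤ) ≤ a)
    calc (f a : ℝ) ≤ C * (a : ℝ) ^ d := (hN a haN).1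
      _ ≤ |C| * (a : ℝ) ^ d := by gcongr; exact le_abs_self C
      _ ≤ |C| * (i : ℝ) ^ d := by gcongr
  have hi1 : (1 : ℝ) ≤ i := by exact_mod_cast hN1.trans hi
  have hcard : ((#(Icc N i) : ℕ) : ℝ) ≤ i := by
    have : (#(Icc N i) : ℤ) ≤ i := by rw [Int.card_Icc_of_le _ _ (by omega)]; omega
    exact_mod_cast this
  have hsplit : ∑ a ∈ Icc L i, f a ≤ K + ∑ a ∈ Icc N i, f a := by
    calc ∑ a ∈ Icc L i, f a ≤ ∑ a ∈ Icc L N ∪ Icc N i, f a :=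
          sum_le_sum_of_subset fun a ha => by simp only [mem_union, mem_Icc] at ha ⊢; omega
      _ ≤ K + ∑ a ∈ Icc N i, f a := (Nat.le_add_right _ _).trans_eq (sum_union_inter ..)
  calc (∑ a ∈ Icc L i, f a : ℕ) ≤ (K : ℝ) + ∑ a ∈ Icc N i, (f a : ℝ) := by exact_mod_cast hsplit
    _ ≤ K + #(Icc N i) * (|C| * (i : ℝ) ^ d) := by
        gcongr; simpa using sum_le_sum htail
    _ ≤ K * (i : ℝ) ^ (d + 1) + i * (|C| * (i : ℝ) ^ d) := by
        gcongr
        exact le_mul_of_one_le_right (Nat.cast_nonneg K) (one_le_pow₀ hi1)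
    _ = (K + |C|) * (i : ℝ) ^ (d + 1) := by ring

theorem of_le_sub_add {m c i₀ : ℤ} (hf : HasPolyGrowth f d) (hm : 0 < m) (hc : 0 ≤ c)
    (hg : ∀ i < i₀, g i = 0) (hrec : ∀ j, g j ≤ g (j - m) + f (j - c)) :
    HasPolyGrowth g (d + 1) :=
  (hf.sum_Icc (i₀ - c)).mono fun j => (le_sum_Icc_of_le_sub_add hm hg hrec j).trans
    (sum_le_sum_of_subset (Icc_subset_Icc_right (by omega)))

end HasPolyGrowth

end

theorem ModuleCat.finrank_le_of_exact {k : Type*} [DivisionRing k] {X₁ X₂ X₃ : ModuleCat k}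
    {f : X₁ ⟶ X₂} {g : X₂ ⟶ X₃} {w : f ≫ g = 0} (hS : (ShortComplex.mk f g w).Exact)
    [FiniteDimensional k X₁] [FiniteDimensional k X₂] [FiniteDimensional k X₃] :
    Module.finrank k X₂ ≤ Module.finrank k X₁ + Module.finrank k X₃ := by
  have hker : Module.finrank k (LinearMap.ker g.hom) =
      Module.finrank k (LinearMap.range f.hom) := by
    rw [hS.moduleCat_range_eq_ker]
  have := g.hom.finrank_range_add_finrank_ker
  have := f.hom.finrank_range_le
  have := (LinearMap.range g.hom).finrank_le
  omega

universe v

namespace CochainComplex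

open DerivedCategory

variable {k : Type*} [Field k] {K L : CochainComplex (ModuleCat.{v} k) ℤ} (φ : K ⟶ L)
  [∀ i, FiniteDimensional k (K.homology i)] [∀ i, FiniteDimensional k (L.homology i)]
  [∀ i, FiniteDimensional k ((mappingCone φ).homology i)]

theorem finrank_homology_target_le_mappingCone [HasDerivedCategory (ModuleCat.{v} k)] (i : ℤ) :
    Module.finrank k (L.homology i) ≤
      Module.finrank k (K.homology i) + Module.finrank k ((mappingCone φ).homology i) :=
  ModuleCat.finrank_le_of_exact
    (homologyMap_exact₂_of_distTriang _ (mappingCone_triangle_distinguished φ) i)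

theorem finrank_homology_source_le_mappingCone [HasDerivedCategory (ModuleCat.{v} k)]
    (i j : ℤ) (h : i + 1 = j) :
    Module.finrank k (K.homology j) ≤
      Module.finrank k ((mappingCone φ).homology i) + Module.finrank k (L.homology j) :=
  ModuleCat.finrank_le_of_exact
    (homologyMap_exact₁_of_distTriang _ (mappingCone_triangle_distinguished φ) i j h)

end CochainComplex

noncomputable def DerivedCategory.homologyIsoOfIso {C : Type*} [Category C] [Abelian C]
    [HasDerivedCategory C] {K L : CochainComplex C ℤ} (e : Q.obj K ≅ Q.obj L) (i : ℤ) :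
    K.homology i ≅ L.homology i :=
  ((homologyFunctorFactors C i).app K).symm ≪≫ (homologyFunctor C i).mapIso e ≪≫
    (homologyFunctorFactors C i).app L

theorem growth_of_cone_general (k : Type) [Field k] [HasDerivedCategory (ModuleCat k)]
    (n : ℤ) (hn : n ≠ 0) (d : ℕ)
    (M N : CochainComplex (ModuleCat k) ℤ)
    (hMfin : ∀ i : ℤ, FiniteDimensional k (M.homology i))
    (hNfin : ∀ i : ℤ, FiniteDimensional k (N.homology i))
    (hMbdd : ∃ i₀ : ℤ, ∀ i < i₀, Limits.IsZero (M.homology i))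
    (χ : (M⟦(-n : ℤ)⟧ : CochainComplex (ModuleCat k) ℤ) ⟶ M)
    (hiso : Nonempty (DerivedCategory.Q.obj N ≅
      DerivedCategory.Q.obj (CochainComplex.mappingCone χ)))
    (hN : HasPolyGrowth (fun i : ℤ => Module.finrank k (N.homology i)) d) :
    HasPolyGrowth (fun i : ℤ => Module.finrank k (M.homology i)) (d + 1) := by
  obtain ⟨e⟩ := hiso
  obtain ⟨i₀, hM0⟩ := hMbdd
  have eShift (i : ℤ) : (M⟦-n⟧).homology i ≅ M.homology (i - n) :=
    (CochainComplex.ShiftSequence.shiftIso _ (-n) i (i - n) (by omega)).app M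
  have eCone (i : ℤ) : (CochainComplex.mappingCone χ).homology i ≅ N.homology i :=
    DerivedCategory.homologyIsoOfIso e.symm i
  have (i : ℤ) : FiniteDimensional k ((M⟦-n⟧).homology i) := .equiv (eShift i).symm.toLinearEquiv
  have (i : ℤ) : FiniteDimensional k ((CochainComplex.mappingCone χ).homology i) :=
    .equiv (eCone i).symm.toLinearEquiv
  have hMzero (i : ℤ) (hi : i < i₀) : Module.finrank k (M.homology i) = 0 :=
    have := ModuleCat.isZero_iff_subsingleton.mp (hM0 i hi)
    Module.finrank_zero_of_subsingleton
  rcases hn.lt_or_gt with hneg | hpos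
  · refine hN.of_le_sub_add (m := -n) (c := 1 - n) (by omega) (by omega) hMzero fun j => ?_
    have := CochainComplex.finrank_homology_source_le_mappingCone χ (j + n - 1) (j + n) (by omega)
    rw [(eShift _).toLinearEquiv.finrank_eq, (eCone _).toLinearEquiv.finrank_eq,
      add_sub_cancel_right] at this
    rw [sub_neg_eq_add, show j - (1 - n) = j + n - 1 by ring]
    omega
  · refine hN.of_le_sub_add (m := n) (c := 0) hpos le_rfl hMzero fun j => ?_
    have := CochainComplex.finrank_homology_target_le_mappingCone χ j
    rw [(eShift _).toLinearEquiv.finrank_eq, (eCone _).toLinearEquiv.finrank_eq] at this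
    rwa [sub_zero]

/-- Growth lemma for mapping cones: if `M`, `N` are locally finite, cohomologically bounded below
cochain complexes of `k`-vector spaces, `n ≠ 0`, and in the derived category `N` is isomorphic to
the mapping cone of a morphism `χ : Σₙ M ⟶ M` (where `Σₙ M = M⟦-n⟧` is the cohomological shift
with `H^i(Σₙ M) = H^{i-n}(M)`), then polynomial growth of degree `≤ d` for `i ↦ dim_k H^i(N)`
implies polynomial growth of degree `≤ d + 1` for `i ↦ dim_k H^i(M)`. -/
theorem growth_of_cone (k : Type) [Field k] [HasDerivedCategory (ModuleCat k)]
    (n : ℤ) (hn : n ≠ 0) (d : ℕ)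
    (M N : CochainComplex (ModuleCat k) ℤ)
    (hMfin : ∀ i : ℤ, FiniteDimensional k (M.homology i))
    (hNfin : ∀ i : ℤ, FiniteDimensional k (N.homology i))
    (hMbdd : ∃ i₀ : ℤ, ∀ i < i₀, Limits.IsZero (M.homology i))
    (hNbdd : ∃ i₀ : ℤ, ∀ i < i₀, Limits.IsZero (N.homology i))
    (χ : (M⟦(-n : ℤ)⟧ : CochainComplex (ModuleCat k) ℤ) ⟶ M)
    (hiso : Nonempty (DerivedCategory.Q.obj N ≅
      DerivedCategory.Q.obj (CochainComplex.mappingCone χ)))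
    (hN : HasPolyGrowth (fun i : ℤ => Module.finrank k (N.homology i)) d) :
    HasPolyGrowth (fun i : ℤ => Module.finrank k (M.homology i)) (d + 1) :=
  growth_of_cone_general k n hn d M N hMfin hNfin hMbdd χ hiso hN
end

section
/- Let R be a commutative ring and ζ ∈ R a nonzerodivisor; write Q = R/(ζ) and π : R → Q for the quotient map. Suppose there is a ring homomorphism σ : Q → R with π ∘ σ = id_Q. Then for every n ≥ 1 there is a ring isomorphism Q[t]/(tⁿ) ≅ R/(ζⁿ) sending the class of t to the class of ζ and, for every q ∈ Q, the class of the constant polynomial q to the class of σ(q). (This is the inductive step in the paper's Hochschild cohomology computation, showing R/(ζⁿ) ≅ Q[ζ]/(ζⁿ) as rings.) -/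
/-! Evaluating polynomials at `ζ` through the section, `p ↦ p.eval₂ σ ζ`, gives a ring map
`Q[t] → R/(ζⁿ)`. It is onto because every `r` can be expanded ζ-adically,
`r ≡ σ(π r) + ζ r₁`, with coefficients in the image of `σ`. Its kernel is `(tⁿ)`: if `ζ ∣ p(ζ)`
then the constant coefficient `q` has `ζ ∣ σ q`, so `q = π (σ q) = 0`, and cancelling the
nonzerodivisor `ζ` passes to `p / t`. -/

open Polynomial

namespace TruncatedPolynomial

variable {R : Type*} [CommRing R] {ζ : R} {σ : R ⧸ Ideal.span {ζ} →+* R}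

lemma dvd_sub_section_mk (hσ : Function.LeftInverse (Ideal.Quotient.mk _) σ) (r : R) :
    ζ ∣ r - σ (Ideal.Quotient.mk _ r) :=
  Ideal.mem_span_singleton.mp <| Ideal.Quotient.eq.mp (hσ _).symm

lemma eq_zero_of_dvd_section (hσ : Function.LeftInverse (Ideal.Quotient.mk _) σ)
    {q : R ⧸ Ideal.span {ζ}} (h : ζ ∣ σ q) : q = 0 := by
  rw [← hσ q, Ideal.Quotient.eq_zero_iff_mem, Ideal.mem_span_singleton]
  exact h

lemma exists_pow_dvd_sub_eval₂ (hσ : Function.LeftInverse (Ideal.Quotient.mk _) σ) (k : ℕ)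
    (r : R) : ∃ p : (R ⧸ Ideal.span {ζ})[X], ζ ^ k ∣ r - p.eval₂ σ ζ := by
  induction k generalizing r with
  | zero => exact ⟨0, by simp⟩
  | succ k ih =>
    obtain ⟨r₁, hr₁⟩ := dvd_sub_section_mk hσ r
    obtain ⟨p₁, hp₁⟩ := ih r₁
    refine ⟨C (Ideal.Quotient.mk _ r) + X * p₁, ?_⟩
    have hsplit : r - (C (Ideal.Quotient.mk _ r) + X * p₁).eval₂ σ ζ
        = ζ * (r₁ - p₁.eval₂ σ ζ) := by
      rw [eval₂_add, eval₂_mul, eval₂_C, eval₂_X, mul_sub, ← hr₁]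
      ring
    rw [hsplit, pow_succ']
    exact mul_dvd_mul_left ζ hp₁

lemma X_pow_dvd_of_pow_dvd_eval₂ (hζ : IsLeftRegular ζ)
    (hσ : Function.LeftInverse (Ideal.Quotient.mk _) σ) (k : ℕ) (p : (R ⧸ Ideal.span {ζ})[X])
    (hp : ζ ^ k ∣ p.eval₂ σ ζ) : X ^ k ∣ p := by
  induction k generalizing p with
  | zero => simp
  | succ k ih =>
    obtain ⟨c, hc⟩ := hp
    have heval : p.eval₂ σ ζ = σ (p.coeff 0) + ζ * p.divX.eval₂ σ ζ := by
      conv_lhs => rw [← X_mul_divX_add p]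
      rw [eval₂_add, eval₂_mul, eval₂_X, eval₂_C, add_comm]
    have hcoeff : p.coeff 0 = 0 := by
      refine eq_zero_of_dvd_section hσ ⟨ζ ^ k * c - p.divX.eval₂ σ ζ, ?_⟩
      linear_combination hc - heval
    have hσcoeff : σ (p.coeff 0) = 0 := by rw [hcoeff, map_zero]
    have hdivX : p.divX.eval₂ σ ζ = ζ ^ k * c :=
      hζ (by linear_combination hc - heval - hσcoeff)
    rw [← X_mul_divX_add p, hcoeff, map_zero, add_zero, pow_succ']
    exact mul_dvd_mul_left X (ih p.divX ⟨c, hdivX⟩)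

noncomputable def evalMod (σ : R ⧸ Ideal.span {ζ} →+* R) (n : ℕ) :
    (R ⧸ Ideal.span {ζ})[X] →+* R ⧸ Ideal.span {ζ ^ n} :=
  (Ideal.Quotient.mk _).comp (eval₂RingHom σ ζ)

lemma evalMod_apply (n : ℕ) (p : (R ⧸ Ideal.span {ζ})[X]) :
    evalMod σ n p = Ideal.Quotient.mk _ (p.eval₂ σ ζ) :=
  rfl

lemma evalMod_surjective (hσ : Function.LeftInverse (Ideal.Quotient.mk _) σ) (n : ℕ) :
    Function.Surjective (evalMod σ n) := by
  intro s
  obtain ⟨r, rfl⟩ := Ideal.Quotient.mk_surjective s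
  obtain ⟨p, hp⟩ := exists_pow_dvd_sub_eval₂ hσ n r
  refine ⟨p, (Ideal.Quotient.eq.mpr ?_).symm⟩
  exact Ideal.mem_span_singleton.mpr hp

lemma ker_evalMod (hζ : IsLeftRegular ζ) (hσ : Function.LeftInverse (Ideal.Quotient.mk _) σ)
    (n : ℕ) : RingHom.ker (evalMod σ n) = Ideal.span {X ^ n} := by
  ext p
  rw [RingHom.mem_ker, evalMod_apply, Ideal.Quotient.eq_zero_iff_mem, Ideal.mem_span_singleton,
    Ideal.mem_span_singleton]
  refine ⟨X_pow_dvd_of_pow_dvd_eval₂ hζ hσ n p, fun ⟨d, hd⟩ => ⟨d.eval₂ σ ζ, ?_⟩⟩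
  rw [hd, eval₂_mul, eval₂_X_pow]

end TruncatedPolynomial

open TruncatedPolynomial in
theorem truncated_polynomial_iso_general {R : Type*} [CommRing R] (ζ : R)
    (hζ : ∀ x : R, ζ * x = 0 → x = 0)
    (σ : R ⧸ Ideal.span {ζ} →+* R)
    (hσ : (Ideal.Quotient.mk (Ideal.span {ζ})).comp σ = RingHom.id _)
    (n : ℕ) :
    ∃ e : (Polynomial (R ⧸ Ideal.span {ζ}) ⧸
        Ideal.span {(Polynomial.X : Polynomial (R ⧸ Ideal.span {ζ})) ^ n}) ≃+*
        (R ⧸ Ideal.span {ζ ^ n}),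
      e (Ideal.Quotient.mk _ Polynomial.X) = Ideal.Quotient.mk _ ζ ∧
      ∀ q : R ⧸ Ideal.span {ζ},
        e (Ideal.Quotient.mk _ (Polynomial.C q)) = Ideal.Quotient.mk _ (σ q) := by
  have hregular : IsLeftRegular ζ := isLeftRegular_iff_right_eq_zero_of_mul.mpr hζ
  have hsection : Function.LeftInverse (Ideal.Quotient.mk _) σ := RingHom.congr_fun hσ
  refine ⟨(Ideal.quotEquivOfEq (ker_evalMod hregular hsection n).symm).trans
    (RingHom.quotientKerEquivOfSurjective (evalMod_surjective hsection n)), ?_, fun q => ?_⟩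
  · simp [evalMod_apply]
  · simp [evalMod_apply]

/-- Let `R` be a commutative ring, `ζ` a nonzerodivisor, `Q = R/(ζ)` with quotient map `π`,
and suppose `π` admits a ring-theoretic section `σ : Q → R`.  Then for every `n ≥ 1` there is a
ring isomorphism `Q[t]/(tⁿ) ≅ R/(ζⁿ)` sending the class of `t` to the class of `ζ` and the class
of each constant `q` to the class of `σ q`. -/
theorem truncated_polynomial_iso {R : Type*} [CommRing R] (ζ : R)
    (hζ : ∀ x : R, ζ * x = 0 → x = 0)
    (σ : R ⧸ Ideal.span {ζ} →+* R)
    (hσ : (Ideal.Quotient.mk (Ideal.span {ζ})).comp σ = RingHom.id _)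
    (n : ℕ) (hn : 1 ≤ n) :
    ∃ e : (Polynomial (R ⧸ Ideal.span {ζ}) ⧸
        Ideal.span {(Polynomial.X : Polynomial (R ⧸ Ideal.span {ζ})) ^ n}) ≃+*
        (R ⧸ Ideal.span {ζ ^ n}),
      e (Ideal.Quotient.mk _ Polynomial.X) = Ideal.Quotient.mk _ ζ ∧
      ∀ q : R ⧸ Ideal.span {ζ},
        e (Ideal.Quotient.mk _ (Polynomial.C q)) = Ideal.Quotient.mk _ (σ q) :=
  truncated_polynomial_iso_general ζ hζ σ hσ n
end

section
/- Let R = ℚ[u,v,p]/(u², uv, up, p²). Then: (1) the radical of the principal ideal generated by (the image of) v equals the ideal generated by the images of u, v and p; and (2) the set of v-power-torsion elements of R, namely {x ∈ R : vⁿ x = 0 for some n ≥ 0}, is exactly the one-dimensional ℚ-subspace spanned by the image of u. (This computes the zeroth local cohomology H⁰_𝔪(R) = ℚ·u in the paper's h-Gorenstein example, showing R is not Cohen–Macaulay.) -/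
/-!
The ideal `𝔪 = (u, v, p)` of `ℚ[u,v,p]` is the kernel of evaluation at the origin, so its image
in `R` is prime; as `u² = p² = 0` in `R`, it is the radical of `(v)`.
For the torsion, substituting `u ↦ 0` maps `R` onto `ℚ[v,p]/(p²)`, on which `v` is a
nonzerodivisor, so a `v`-power-torsion element lies in `uR`; and `uR = ℚu` because `u𝔪 = 0` in `R`.
Finally `u ≠ 0` in `R` since the ideal is generated in degree two.
-/

open MvPolynomial

/-- The variables `u`, `v`, `p` of `ℚ[u,v,p]`. -/
noncomputable def uPoly : MvPolynomial (Fin 3) ℚ := X 0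
noncomputable def vPoly : MvPolynomial (Fin 3) ℚ := X 1
noncomputable def pPoly : MvPolynomial (Fin 3) ℚ := X 2

/-- The ideal `I = (u², uv, up, p²)` of `ℚ[u,v,p]`. -/
noncomputable def exIdeal : Ideal (MvPolynomial (Fin 3) ℚ) :=
  Ideal.span {uPoly ^ 2, uPoly * vPoly, uPoly * pPoly, pPoly ^ 2}

/-- The quotient ring `R = ℚ[u,v,p]/(u², uv, up, p²)`. -/
noncomputable abbrev exRing : Type := MvPolynomial (Fin 3) ℚ ⧸ exIdeal

/-- The quotient map `ℚ[u,v,p] → R`. -/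
noncomputable def mkEx : MvPolynomial (Fin 3) ℚ →+* exRing := Ideal.Quotient.mk exIdeal

namespace MvPolynomial

section CommSemiring

variable {σ R : Type*} [CommSemiring R]

theorem idealOfVars_eq_ker_constantCoeff :
    idealOfVars σ R = RingHom.ker (constantCoeff : MvPolynomial σ R →+* R) := by
  ext f
  rw [← pow_one (idealOfVars σ R), mem_pow_idealOfVars_iff', RingHom.mem_ker, constantCoeff_eq]
  refine ⟨fun h => h 0 (by simp), fun h m hm => ?_⟩
  rw [Nat.lt_one_iff, Finsupp.degree_eq_zero_iff] at hm
  rwa [hm]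

theorem mem_span_X_pow_iff {i : σ} {k : ℕ} {f : MvPolynomial σ R} :
    f ∈ Ideal.span {X i ^ k} ↔ ∀ m ∈ f.support, k ≤ m i := by
  classical
  have h : ({X i ^ k} : Set (MvPolynomial σ R)) =
      (fun s => monomial s (1 : R)) '' {Finsupp.single i k} := by
    simp [X_pow_eq_monomial]
  rw [h, mem_ideal_span_monomial_image]
  simp [Finsupp.single_le_iff]

theorem mem_span_X_pow_of_X_pow_mul_mem {i j : σ} (hji : j ≠ i) {k n : ℕ}
    {f : MvPolynomial σ R} (h : X j ^ n * f ∈ Ideal.span {X i ^ k}) :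
    f ∈ Ideal.span {X i ^ k} := by
  classical
  rw [mem_span_X_pow_iff] at h ⊢
  intro m hm
  have hshift : Finsupp.single j n + m ∈ (X j ^ n * f).support := by
    rwa [mem_support_iff, X_pow_eq_monomial, coeff_monomial_mul, one_mul, ← mem_support_iff]
  simpa [Finsupp.single_eq_of_ne' hji] using h _ hshift

end CommSemiring

theorem sub_aeval_update_X_zero_mem_span_X {σ R : Type*} [CommRing R] [DecidableEq σ] (i : σ)
    (f : MvPolynomial σ R) : f - aeval (Function.update X i 0) f ∈ Ideal.span {X i} := by
  rw [← Ideal.Quotient.eq]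
  suffices h : (Ideal.Quotient.mkₐ R (Ideal.span {X i})).comp (aeval (Function.update X i 0)) =
      Ideal.Quotient.mkₐ R _ from (congrArg (· f) h).symm
  refine algHom_ext fun j => ?_
  rcases eq_or_ne j i with rfl | hji
  · simp
  · simp [Function.update_of_ne hji]

end MvPolynomial

local notation "𝔪" => idealOfVars (Fin 3) ℚ

theorem mkEx_eq_zero_iff {f : MvPolynomial (Fin 3) ℚ} : mkEx f = 0 ↔ f ∈ exIdeal :=
  Ideal.Quotient.eq_zero_iff_mem

theorem mkEx_surjective : Function.Surjective mkEx :=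
  Ideal.Quotient.mk_surjective

theorem exIdeal_le_iff {J : Ideal (MvPolynomial (Fin 3) ℚ)} :
    exIdeal ≤ J ↔ uPoly ^ 2 ∈ J ∧ uPoly * vPoly ∈ J ∧ uPoly * pPoly ∈ J ∧ pPoly ^ 2 ∈ J := by
  simp only [exIdeal, Ideal.span_le, Set.insert_subset_iff, Set.singleton_subset_iff,
    SetLike.mem_coe]

theorem span_uPoly_vPoly_pPoly : Ideal.span {uPoly, vPoly, pPoly} = 𝔪 := by
  congr 1
  ext f
  simp [Fin.exists_fin_succ, uPoly, vPoly, pPoly, eq_comm]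

theorem exIdeal_le_idealOfVars_sq : exIdeal ≤ 𝔪 ^ 2 := by
  have hX (i : Fin 3) : X i ∈ 𝔪 := Ideal.subset_span (Set.mem_range_self i)
  simp only [exIdeal_le_iff, sq]
  exact ⟨Ideal.mul_mem_mul (hX 0) (hX 0), Ideal.mul_mem_mul (hX 0) (hX 1),
    Ideal.mul_mem_mul (hX 0) (hX 2), Ideal.mul_mem_mul (hX 2) (hX 2)⟩

theorem mkEx_uPoly_ne_zero : mkEx uPoly ≠ 0 := by
  rw [Ne, mkEx_eq_zero_iff]
  intro hu
  have hsq := exIdeal_le_idealOfVars_sq hu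
  rw [uPoly, X, monomial_mem_pow_idealOfVars_iff _ _ one_ne_zero] at hsq
  simp at hsq

theorem uPoly_mul_mem_exIdeal {g : MvPolynomial (Fin 3) ℚ} (hg : g ∈ 𝔪) :
    uPoly * g ∈ exIdeal := by
  suffices h : 𝔪 ≤ exIdeal.colon {uPoly} by
    simpa [mul_comm] using h hg
  rw [← span_uPoly_vPoly_pPoly, Ideal.span_le]
  simp only [Set.insert_subset_iff, Set.singleton_subset_iff, SetLike.mem_coe,
    Submodule.mem_colon_singleton, smul_eq_mul]
  refine ⟨?_, ?_, ?_⟩ <;> exact Ideal.subset_span (by simp [sq, mul_comm])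

theorem mkEx_uPoly_mul (q : MvPolynomial (Fin 3) ℚ) :
    mkEx uPoly * mkEx q = constantCoeff q • mkEx uPoly := by
  have hq : q - C (constantCoeff q) ∈ 𝔪 := by
    simp [idealOfVars_eq_ker_constantCoeff]
  calc mkEx uPoly * mkEx q
      = mkEx (C (constantCoeff q)) * mkEx uPoly + mkEx (uPoly * (q - C (constantCoeff q))) := by
        simp only [map_mul, map_sub]; ring
    _ = constantCoeff q • mkEx uPoly := by
        rw [mkEx_eq_zero_iff.mpr (uPoly_mul_mem_exIdeal hq), add_zero]
        exact (Algebra.smul_def (constantCoeff q) (mkEx uPoly)).symm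

theorem mkEx_uPoly_sq : mkEx uPoly ^ 2 = 0 := by
  rw [← map_pow, mkEx_eq_zero_iff]
  exact Ideal.subset_span (by simp)

theorem mkEx_pPoly_sq : mkEx pPoly ^ 2 = 0 := by
  rw [← map_pow, mkEx_eq_zero_iff]
  exact Ideal.subset_span (by simp)

theorem mkEx_vPoly_mul_uPoly : mkEx vPoly * mkEx uPoly = 0 := by
  rw [← map_mul, mkEx_eq_zero_iff, mul_comm]
  exact Ideal.subset_span (by simp)

theorem span_mkEx_uPoly_vPoly_pPoly_isPrime :
    (Ideal.span {mkEx uPoly, mkEx vPoly, mkEx pPoly}).IsPrime := by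
  have hmap : Ideal.span {mkEx uPoly, mkEx vPoly, mkEx pPoly} = Ideal.map mkEx 𝔪 := by
    rw [← span_uPoly_vPoly_pPoly, Ideal.map_span]
    simp [Set.image_insert_eq]
  have hker : RingHom.ker mkEx ≤ 𝔪 := by
    rw [mkEx, Ideal.mk_ker]
    exact exIdeal_le_idealOfVars_sq.trans (Ideal.pow_le_self two_ne_zero)
  have : Ideal.IsPrime 𝔪 := by
    rw [idealOfVars_eq_ker_constantCoeff]
    exact RingHom.ker_isPrime _
  rw [hmap]
  exact Ideal.map_isPrime_of_surjective mkEx_surjective hker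

theorem radical_span_mkEx_vPoly :
    (Ideal.span {mkEx vPoly}).radical = Ideal.span {mkEx uPoly, mkEx vPoly, mkEx pPoly} := by
  refine le_antisymm ?_ ?_
  · rw [span_mkEx_uPoly_vPoly_pPoly_isPrime.radical_le_iff, Ideal.span_singleton_le_iff_mem]
    exact Ideal.subset_span (by simp)
  · simp only [Ideal.span_le, Set.insert_subset_iff, Set.singleton_subset_iff, SetLike.mem_coe]
    exact ⟨⟨2, mkEx_uPoly_sq ▸ zero_mem _⟩, Ideal.le_radical (Ideal.mem_span_singleton_self _),
      ⟨2, mkEx_pPoly_sq ▸ zero_mem _⟩⟩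

theorem mkEx_mem_span_uPoly_of_vPoly_pow_mul_mem {n : ℕ} {f : MvPolynomial (Fin 3) ℚ}
    (h : vPoly ^ n * f ∈ exIdeal) : mkEx f ∈ Submodule.span ℚ {mkEx uPoly} := by
  obtain ⟨q, hq⟩ := Ideal.mem_span_singleton.mp (sub_aeval_update_X_zero_mem_span_X 0 f)
  set killU : MvPolynomial (Fin 3) ℚ →ₐ[ℚ] MvPolynomial (Fin 3) ℚ :=
    aeval (Function.update X 0 0)
  have hI : exIdeal ≤ (Ideal.span {pPoly ^ 2}).comap killU := by
    simp [exIdeal_le_iff, killU, uPoly, vPoly, pPoly]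
  have hf : killU f ∈ Ideal.span {pPoly ^ 2} := by
    refine mem_span_X_pow_of_X_pow_mul_mem (j := 1) (n := n) (by decide) ?_
    simpa [killU, vPoly, pPoly] using hI h
  have hpSq : Ideal.span {pPoly ^ 2} ≤ exIdeal :=
    Ideal.span_singleton_le_iff_mem _ |>.mpr (Ideal.subset_span (by simp))
  have hfq : mkEx f = mkEx uPoly * mkEx q := by
    calc mkEx f = mkEx (killU f) + mkEx (f - killU f) := by rw [← map_add, add_sub_cancel]
      _ = mkEx uPoly * mkEx q := by
        rw [mkEx_eq_zero_iff.mpr (hpSq hf), zero_add, hq, map_mul]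
        rfl
  rw [hfq, mkEx_uPoly_mul]
  exact Submodule.smul_mem _ _ (Submodule.mem_span_singleton_self _)

/-- In `R = ℚ[u,v,p]/(u², uv, up, p²)`:
(1) the radical of the principal ideal `(v)` is the ideal `(u, v, p)` generated by the images of
all three variables, and
(2) the `v`-power-torsion elements `{x : vⁿ x = 0 for some n ≥ 0}` form exactly the
one-dimensional `ℚ`-subspace spanned by the image of `u`. -/
theorem exRing_radical_and_torsion :
    (Ideal.span {mkEx vPoly}).radical = Ideal.span {mkEx uPoly, mkEx vPoly, mkEx pPoly} ∧
    {x : exRing | ∃ n : ℕ, (mkEx vPoly) ^ n * x = 0} =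
      ↑(Submodule.span ℚ {mkEx uPoly} : Submodule ℚ exRing) ∧
    Module.finrank ℚ (Submodule.span ℚ {mkEx uPoly} : Submodule ℚ exRing) = 1 := by
  refine ⟨radical_span_mkEx_vPoly, ?_, finrank_span_singleton mkEx_uPoly_ne_zero⟩
  ext x
  constructor
  · rintro ⟨n, hn⟩
    obtain ⟨f, rfl⟩ := mkEx_surjective x
    rw [← map_pow, ← map_mul, mkEx_eq_zero_iff] at hn
    exact mkEx_mem_span_uPoly_of_vPoly_pow_mul_mem hn
  · intro hx
    obtain ⟨c, rfl⟩ := Submodule.mem_span_singleton.mp hx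
    exact ⟨1, by rw [pow_one, mul_smul_comm, mkEx_vPoly_mul_uPoly, smul_zero]⟩
end
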